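/- arXiv:1912.03519 — 3 statements merged into one kernel-verified Lean document; each statement's English description precedes it below -/
import Mathlib

section
/- For all integers n ≥ 1 and m ≥ 2, the number of fuzzy topologies on an n-element set X with membership values in an m-element chain M having exactly 3 open sets is τ_F(n, m, 3) = m^n − 2. -/
/-- A fuzzy topology on `Fin n` with membership values in the `m`-element chain `Fin m`:
a collection of fuzzy sets (functions `Fin n → Fin m`) containing the constant function
with the least value, the constant function with the greatest value, and closed under
pointwise (binary) supremum and infimum. -/
def IsFuzzyTopology {n m : ℕ} (hm : m ≠ 0) (τ : Finset (Fin n → Fin m)) : Prop :=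
  (fun _ => (⟨0, Nat.pos_of_ne_zero hm⟩ : Fin m)) ∈ τ ∧
  (fun _ => (⟨m - 1, by omega⟩ : Fin m)) ∈ τ ∧
  (∀ f ∈ τ, ∀ g ∈ τ, f ⊔ g ∈ τ) ∧
  (∀ f ∈ τ, ∀ g ∈ τ, f ⊓ g ∈ τ)

/-- `tauF n m k hm` is the number of fuzzy topologies on an `n`-element set with values in an
`m`-element chain having exactly `k` open sets. -/
noncomputable def tauF (n m k : ℕ) (hm : m ≠ 0) : ℕ :=
  Nat.card {τ : Finset (Fin n → Fin m) // IsFuzzyTopology hm τ ∧ τ.card = k}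

/-- `biTauF n m k hm` is the number of fuzzy bitopological spaces (unordered pairs of fuzzy
topologies, allowing equal ones) on an `n`-element set with values in an `m`-element chain in
which both topologies have exactly `k` open sets. -/
noncomputable def biTauF (n m k : ℕ) (hm : m ≠ 0) : ℕ :=
  Nat.card (Sym2 {τ : Finset (Fin n → Fin m) // IsFuzzyTopology hm τ ∧ τ.card = k})

/-!
Every fuzzy topology contains the bottom and top of the lattice `Fin n → Fin m` (the constant
fuzzy sets), and for any third fuzzy set `f` the chain `⊥ ≤ f ≤ ⊤` is already closed under `⊔`
and `⊓`. Hence fuzzy topologies with three open sets are exactly the `{⊥, ⊤, f}` with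
`f ∉ {⊥, ⊤}`, and there are `m ^ n - 2` of them. The count holds in any finite nontrivial
bounded lattice.
-/

section BoundedLattice

variable {α : Type*} [Lattice α] [BoundedOrder α]

def IsBoundedSublattice (s : Finset α) : Prop :=
  ⊥ ∈ s ∧ ⊤ ∈ s ∧ IsSublattice (s : Set α)

lemma isSublattice_insert_bot_insert_top (a : α) : IsSublattice ({⊥, ⊤, a} : Set α) := by
  have hTop : IsSublattice (insert ⊤ {a} : Set α) :=
    ⟨supClosed_singleton.insert_upperBounds fun _ _ => le_top,
      infClosed_singleton.insert_upperBounds fun _ _ => le_top⟩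
  exact ⟨hTop.supClosed.insert_lowerBounds fun _ _ => bot_le,
    hTop.infClosed.insert_lowerBounds fun _ _ => bot_le⟩

lemma card_ne_bot_and_ne_top [Nontrivial α] [Finite α] :
    Nat.card {a : α // a ≠ ⊥ ∧ a ≠ ⊤} = Nat.card α - 2 := by
  have hset : {a : α | a ≠ ⊥ ∧ a ≠ ⊤} = ({⊥, ⊤} : Set α)ᶜ := by
    ext; simp
  change Nat.card {a : α | a ≠ ⊥ ∧ a ≠ ⊤} = _
  rw [Nat.card_coe_set_eq, hset, Set.ncard_compl, Set.ncard_pair bot_ne_top]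

variable [DecidableEq α]

lemma isBoundedSublattice_insert_bot_insert_top (a : α) :
    IsBoundedSublattice ({⊥, ⊤, a} : Finset α) := by
  refine ⟨by simp, by simp, ?_⟩
  push_cast
  exact isSublattice_insert_bot_insert_top a

lemma injOn_insert_bot_insert_top :
    Set.InjOn (fun a : α => ({⊥, ⊤, a} : Finset α)) {a | a ≠ ⊥ ∧ a ≠ ⊤} := by
  intro a ha b _ hab
  have : a ∈ ({⊥, ⊤, b} : Finset α) := by
    simp only at hab
    simp [← hab]
  simpa [ha.1, ha.2] using this

variable [Nontrivial α]

lemma card_insert_bot_insert_top {a : α} (ha : a ≠ ⊥ ∧ a ≠ ⊤) :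
    ({⊥, ⊤, a} : Finset α).card = 3 := by
  rw [Finset.card_insert_of_notMem, Finset.card_pair (Ne.symm ha.2)]
  simp [bot_ne_top, Ne.symm ha.1]

lemma IsBoundedSublattice.exists_eq_insert_bot_insert_top {s : Finset α}
    (hs : IsBoundedSublattice s) (hcard : s.card = 3) :
    ∃ a, (a ≠ ⊥ ∧ a ≠ ⊤) ∧ s = {⊥, ⊤, a} := by
  have hsub : ({⊥, ⊤} : Finset α) ⊆ s := Finset.insert_subset hs.1 (by simpa using hs.2.1)
  obtain ⟨a, ha⟩ : ∃ a, s \ {⊥, ⊤} = {a} := by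
    rw [← Finset.card_eq_one, Finset.card_sdiff_of_subset hsub, hcard,
      Finset.card_pair bot_ne_top]
  have has : a ∈ s \ {⊥, ⊤} := ha ▸ Finset.mem_singleton_self a
  simp only [Finset.mem_sdiff, Finset.mem_insert, Finset.mem_singleton, not_or] at has
  refine ⟨a, has.2, (Finset.eq_of_subset_of_card_le ?_ ?_).symm⟩
  · exact Finset.insert_subset hs.1
      (Finset.insert_subset hs.2.1 (Finset.singleton_subset_iff.2 has.1))
  · rw [hcard, card_insert_bot_insert_top has.2]

theorem card_isBoundedSublattice_card_eq_three [Finite α] :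
    Nat.card {s : Finset α // IsBoundedSublattice s ∧ s.card = 3} = Nat.card α - 2 := by
  rw [← card_ne_bot_and_ne_top]
  symm
  refine Nat.card_eq_of_bijective (fun a => ⟨{⊥, ⊤, a.1},
    isBoundedSublattice_insert_bot_insert_top a.1, card_insert_bot_insert_top a.2⟩) ⟨?_, ?_⟩
  · rintro ⟨a, ha⟩ ⟨b, hb⟩ hab
    exact Subtype.ext (injOn_insert_bot_insert_top ha hb (congrArg Subtype.val hab))
  · rintro ⟨s, hs, hcard⟩
    obtain ⟨a, ha, rfl⟩ := hs.exists_eq_insert_bot_insert_top hcard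
    exact ⟨⟨a, ha⟩, rfl⟩

end BoundedLattice

lemma isFuzzyTopology_iff_isBoundedSublattice {n m : ℕ} [NeZero m]
    (τ : Finset (Fin n → Fin m)) :
    IsFuzzyTopology (NeZero.ne m) τ ↔ IsBoundedSublattice τ := by
  have hbot : (fun _ => (⟨0, Nat.pos_of_ne_zero (NeZero.ne m)⟩ : Fin m)) = (⊥ : Fin n → Fin m) :=
    rfl
  have htop : (fun _ => (⟨m - 1, by have := NeZero.ne m; omega⟩ : Fin m)) =
      (⊤ : Fin n → Fin m) :=
    rfl
  unfold IsFuzzyTopology IsBoundedSublattice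
  rw [hbot, htop]
  exact ⟨fun ⟨h0, h1, hsup, hinf⟩ => ⟨h0, h1, hsup, hinf⟩,
    fun ⟨h0, h1, hsup, hinf⟩ => ⟨h0, h1, hsup, hinf⟩⟩

theorem tauF_three_open_sets (n m : ℕ) (hn : 1 ≤ n) (hm : 2 ≤ m) :
    tauF n m 3 (by omega) = m ^ n - 2 := by
  have : NeZero m := ⟨by omega⟩
  have : Nonempty (Fin n) := ⟨⟨0, hn⟩⟩
  have : Nontrivial (Fin m) := Fin.nontrivial_iff_two_le.2 hm
  unfold tauF
  simp_rw [isFuzzyTopology_iff_isBoundedSublattice]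
  rw [card_isBoundedSublattice_card_eq_three, Nat.card_fun]
  simp
end

section
/- For all integers n ≥ m ≥ 2 and every integer k with m^n − m^(n−2) < k < m^n, there is no fuzzy topology on an n-element set X with membership values in an m-element chain M having exactly k open sets; that is, τ_F(n, m, k) = 0. -/
/-!
Every fuzzy set is the supremum of the "fuzzy points" `update ⊥ x a`, so a proper, sup-closed
family `τ` misses some fuzzy point `update ⊥ x a`. Let `u` be the smallest member of `τ` whose
value at `x` is at least `a`; then `u ≠ update ⊥ x a`. If `u y ≠ ⊥` for some `y ≠ x`, no
member of `τ` takes the values `⊤` at `x` and `⊥` at `y`; otherwise `u x > a` and no member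
takes the value `a` at `x`. Either way `τ` avoids every fuzzy set with a prescribed value at
two (or one) prescribed points, and there are at least `m ^ (n - 2)` of them.
-/

open Finset Function

theorem card_add_pow_le_of_forall_not_agree {α β : Type*} [Fintype α] [DecidableEq α]
    [Fintype β] [DecidableEq β] (τ : Finset (α → β)) (S : Finset α) (g : α → β)
    (hτ : ∀ f ∈ τ, ¬ ∀ i ∈ S, f i = g i) :
    #τ + Fintype.card β ^ (Fintype.card α - #S) ≤ Fintype.card β ^ Fintype.card α := by
  set P := Fintype.piFinset fun i => if i ∈ S then {g i} else (univ : Finset β)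
  have hP : #P = Fintype.card β ^ (Fintype.card α - #S) := by
    simp only [P, Fintype.card_piFinset, apply_ite card, card_singleton, card_univ]
    rw [prod_ite, prod_const_one, one_mul, prod_const, filter_not, filter_mem_eq_inter,
      univ_inter, ← compl_eq_univ_sdiff, card_compl]
  have hdisj : Disjoint τ P := by
    refine disjoint_left.2 fun f hf hfP => hτ f hf fun i hi => ?_
    simpa [P, hi] using Fintype.mem_piFinset.1 hfP i
  calc #τ + Fintype.card β ^ (Fintype.card α - #S) = #(τ ∪ P) := by
        rw [card_union_of_disjoint hdisj, hP]
    _ ≤ Fintype.card β ^ Fintype.card α := by simpa using card_le_univ (τ ∪ P)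

section FuzzyPoints

variable {α β : Type*} [Fintype α] [DecidableEq α]

theorem eq_sup_update_bot [SemilatticeSup β] [OrderBot β] (f : α → β) :
    f = univ.sup fun x => update (⊥ : α → β) x (f x) := by
  funext y
  rw [Finset.sup_apply]
  refine le_antisymm (le_sup_of_le (mem_univ y) (by simp)) (Finset.sup_le fun x _ => ?_)
  by_cases hyx : y = x
  · subst hyx
    simp
  · simp [update_of_ne hyx]

theorem exists_update_bot_notMem [Fintype β] [SemilatticeSup β] [OrderBot β]
    {τ : Finset (α → β)} (hbot : ⊥ ∈ τ) (hsup : SupClosed (τ : Set (α → β))) (hτ : τ ≠ univ) :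
    ∃ x a, update (⊥ : α → β) x a ∉ τ := by
  by_contra! hpoints
  obtain ⟨f, hf⟩ := not_forall.1 (mt eq_univ_iff_forall.2 hτ)
  rw [eq_sup_update_bot f] at hf
  exact hf (sup_mem (τ : Set (α → β)) hbot (fun _ hf _ hg => hsup hf hg) _ _
    fun x _ => hpoints x (f x))

variable [LinearOrder β] [BoundedOrder β]

theorem exists_forbidden_pattern {τ : Finset (α → β)} (htop : ⊤ ∈ τ)
    (hinf : InfClosed (τ : Set (α → β))) {x : α} {a : β} (hxa : update (⊥ : α → β) x a ∉ τ) :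
    ∃ S : Finset α, #S ≤ 2 ∧ ∃ g : α → β, ∀ f ∈ τ, ¬ ∀ i ∈ S, f i = g i := by
  set u := (τ.filter (a ≤ · x)).inf id
  have hu_mem : u ∈ τ :=
    inf_mem (τ : Set (α → β)) htop (fun _ hf _ hg => hinf hf hg) _ _
      fun f hf => (mem_filter.1 hf).1
  have hu_le : ∀ f ∈ τ, a ≤ f x → u ≤ f := fun f hf hfx => inf_le (mem_filter.2 ⟨hf, hfx⟩)
  have hau : a ≤ u x := by
    simp only [u, Finset.inf_apply]
    exact Finset.le_inf fun f hf => (mem_filter.1 hf).2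
  by_cases hsupport : ∃ y ≠ x, u y ≠ ⊥
  · obtain ⟨y, hyx, huy⟩ := hsupport
    refine ⟨{x, y}, card_le_two, update ⊥ x ⊤, fun f hf hfg => huy ?_⟩
    have hfx : f x = ⊤ := by simpa using hfg x (by simp)
    have hfy : f y = ⊥ := by simpa [hyx] using hfg y (by simp)
    exact le_bot_iff.1 (hfy ▸ hu_le f hf (hfx ▸ le_top) y)
  · push Not at hsupport
    have hau' : a < u x := by
      refine lt_of_le_of_ne hau fun hax => hxa ?_
      convert hu_mem using 1
      funext y
      by_cases hyx : y = x
      · subst hyx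
        simp [hax]
      · simp [update_of_ne hyx, hsupport y hyx]
    refine ⟨{x}, by simp, fun _ => a, fun f hf hfg => ?_⟩
    have hfx : f x = a := hfg x (mem_singleton_self x)
    exact (hu_le f hf hfx.ge x).not_gt (hfx ▸ hau')

theorem card_add_pow_card_sub_two_le [Fintype β] {τ : Finset (α → β)} (hbot : ⊥ ∈ τ)
    (htop : ⊤ ∈ τ) (hsup : SupClosed (τ : Set (α → β))) (hinf : InfClosed (τ : Set (α → β)))
    (hτ : τ ≠ univ) :
    #τ + Fintype.card β ^ (Fintype.card α - 2) ≤ Fintype.card β ^ Fintype.card α := by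
  obtain ⟨x, a, hxa⟩ := exists_update_bot_notMem hbot hsup hτ
  obtain ⟨S, hS, g, hg⟩ := exists_forbidden_pattern htop hinf hxa
  calc #τ + Fintype.card β ^ (Fintype.card α - 2)
      ≤ #τ + Fintype.card β ^ (Fintype.card α - #S) := by
        gcongr
        exact Fintype.card_pos_iff.2 ⟨⊥⟩
    _ ≤ Fintype.card β ^ Fintype.card α := card_add_pow_le_of_forall_not_agree τ S g hg

end FuzzyPoints

theorem tauF_gap (n m k : ℕ) (hm : 2 ≤ m)
    (h₁ : m ^ n - m ^ (n - 2) < k) (h₂ : k < m ^ n) :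
    tauF n m k (by omega) = 0 := by
  have : NeZero m := ⟨by omega⟩
  rw [tauF, Nat.card_eq_zero]
  refine Or.inl ⟨fun ⟨τ, ⟨hbot, htop, hsup, hinf⟩, hk⟩ => ?_⟩
  have hτ : τ ≠ univ := by
    rintro rfl
    simp only [card_univ, Fintype.card_pi, Fintype.card_fin, prod_const] at hk
    omega
  have hbound := card_add_pow_card_sub_two_le hbot htop (fun _ hf _ hg => hsup _ hf _ hg)
    (fun _ hf _ hg => hinf _ hf _ hg) hτ
  simp only [Fintype.card_fin, hk] at hbound
  have hpow : m ^ (n - 2) ≤ m ^ n := Nat.pow_le_pow_right (by omega) (by omega)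
  omega
end

section
/- Let X be a nonempty set and let M be a complete linear order with at least two elements. The collection of all fuzzy topologies on X with membership values in M is finite if and only if both X and M are finite. -/
/-- A fuzzy topology on a set `X` with membership values in a complete linear order `M`:
a collection of fuzzy sets (functions `X → M`) containing the constant function with value `⊥`
and the constant function with value `⊤`, closed under pointwise suprema of arbitrary
subfamilies, and closed under pointwise infima of pairs. -/
def IsFuzzyTopologyC {X M : Type*} [CompleteLinearOrder M] (τ : Set (X → M)) : Prop :=
  (fun _ => (⊥ : M)) ∈ τ ∧ (fun _ => (⊤ : M)) ∈ τ ∧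
  (∀ S : Set (X → M), S ⊆ τ → sSup S ∈ τ) ∧
  (∀ f ∈ τ, ∀ g ∈ τ, f ⊓ g ∈ τ)

/-!
For `g : X → M`, the three fuzzy sets `⊥`, `⊤`, `g` already form a fuzzy topology, and different
`g ∉ {⊥, ⊤}` give different ones. So finitely many fuzzy topologies force `X → M` to be finite,
which for nonempty `X` and nontrivial `M` means that `X` and `M` are finite.
-/

section ThreeElements

variable {α : Type*} [CompleteLattice α] {a : α}

theorem sSup_mem_insert_bot_top {S : Set α} (hS : S ⊆ insert a {⊥, ⊤}) :
    sSup S ∈ insert a ({⊥, ⊤} : Set α) := by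
  by_cases htop : ⊤ ∈ S
  · exact .inr <| .inr <| top_le_iff.mp (le_sSup htop)
  have hS' : S ⊆ {a, ⊥} := fun b hb => by
    rcases hS hb with rfl | rfl | rfl
    exacts [.inl rfl, .inr rfl, absurd hb htop]
  by_cases ha : a ∈ S
  · exact .inl <| le_antisymm (sSup_le fun b hb => by rcases hS' hb with rfl | rfl <;> simp)
      (le_sSup ha)
  · refine .inr <| .inl <| sSup_eq_bot.mpr fun b hb => ?_
    rcases hS' hb with rfl | rfl
    exacts [absurd hb ha, rfl]

theorem inf_mem_insert_bot_top {b c : α} (hb : b ∈ insert a ({⊥, ⊤} : Set α))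
    (hc : c ∈ insert a ({⊥, ⊤} : Set α)) : b ⊓ c ∈ insert a ({⊥, ⊤} : Set α) := by
  rcases hb with rfl | rfl | rfl <;> rcases hc with rfl | rfl | rfl <;> simp

end ThreeElements

theorem isFuzzyTopologyC_insert_bot_top {X M : Type*} [CompleteLinearOrder M] (g : X → M) :
    IsFuzzyTopologyC (insert g {⊥, ⊤}) :=
  ⟨.inr <| .inl rfl, .inr <| .inr rfl, fun _ => sSup_mem_insert_bot_top,
    fun _ hf _ hg => inf_mem_insert_bot_top hf hg⟩

theorem finite_fun_of_finite_fuzzyTopologies {X M : Type*} [CompleteLinearOrder M]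
    (h : {τ : Set (X → M) | IsFuzzyTopologyC τ}.Finite) : Finite (X → M) := by
  have hcompl : ({⊥, ⊤} : Set (X → M))ᶜ.Finite :=
    (h.subset <| Set.image_subset_iff.mpr fun g _ => isFuzzyTopologyC_insert_bot_top g)
      |>.of_finite_image (Function.insert_injOn _)
  rw [← Set.finite_univ_iff, ← Set.union_compl_self {⊥, ⊤}]
  exact (Set.toFinite _).union hcompl

theorem Finite.of_finite_fun_left {α β : Type*} [Nontrivial β] [Finite (α → β)] : Finite α := by
  classical
  obtain ⟨b₀, b₁, hb⟩ := exists_pair_ne β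
  refine Finite.of_injective (fun x => Function.update (fun _ => b₀) x b₁) fun x y hxy => ?_
  by_contra hne
  simpa [Function.update_apply, hne, hb.symm] using congrFun hxy x

theorem finitely_many_fuzzy_topologies_iff {X M : Type*} [Nonempty X]
    [CompleteLinearOrder M] [Nontrivial M] :
    {τ : Set (X → M) | IsFuzzyTopologyC τ}.Finite ↔ (Finite X ∧ Finite M) := by
  refine ⟨fun h => ?_, fun ⟨_, _⟩ => Set.toFinite _⟩
  have := finite_fun_of_finite_fuzzyTopologies h
  exact ⟨.of_finite_fun_left (β := M), .of_injective (Function.const X) Function.const_injective⟩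
end
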